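/- (Explicit min-max regret of the LpNML) Let λ > 0 and σ > 0, and let f(y) = N(y; θ̂_yᵀx, σ²)·w(θ̂_y). Then the min-max regret satisfies Γ = log ∫_ℝ f(y) dy = (1/(2σ²))·((λ θ̂_λᵀP_λ x)²/A_λ − λ‖θ̂_λ‖²) + (1/2)·log(K_λ²/A_λ). -/

import Mathlib

open Matrix Real MeasureTheory

noncomputable def gaussD (y m v : ℝ) : ℝ :=
  (Real.sqrt (2 * Real.pi * v))⁻¹ * Real.exp (-(y - m) ^ 2 / (2 * v))

lemma vecMulVec_mulVec' {M : ℕ} (a b v : Fin M → ℝ) :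
    vecMulVec a b *ᵥ v = (b ⬝ᵥ v) • a := by
  ext i
  simp only [Matrix.mulVec, Matrix.vecMulVec_apply, dotProduct, Pi.smul_apply, smul_eq_mul,
    Finset.sum_mul]
  exact Finset.sum_congr rfl fun j _ => by ring

lemma smul_one_posDef {M : ℕ} {l : ℝ} (hl : 0 < l) :
    (l • (1 : Matrix (Fin M) (Fin M) ℝ)).PosDef := by
  refine Matrix.PosDef.of_dotProduct_mulVec_pos ?_ ?_
  · unfold Matrix.IsHermitian
    simp [Matrix.conjTranspose_smul]
  · intro v hv
    simp only [Matrix.smul_mulVec, Matrix.one_mulVec, dotProduct_smul, smul_eq_mul]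
    have h2 : (0:ℝ) < star v ⬝ᵥ v := dotProduct_star_self_pos_iff.mpr hv
    positivity

lemma dot_aux1 {M : ℕ} (a b xv : Fin M → ℝ) (y : ℝ) :
    (a + y • b) ⬝ᵥ xv = a ⬝ᵥ xv + y * (b ⬝ᵥ xv) := by
  simp only [add_dotProduct, smul_dotProduct, smul_eq_mul]

lemma dot_aux2 {M : ℕ} (a b : Fin M → ℝ) (y : ℝ) :
    (a + y • b) ⬝ᵥ (a + y • b) = a ⬝ᵥ a + 2 * y * (a ⬝ᵥ b) + y ^ 2 * (b ⬝ᵥ b) := by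
  simp only [add_dotProduct, dotProduct_add, smul_dotProduct, dotProduct_smul,
    smul_eq_mul, dotProduct_comm b a]
  ring

lemma dot_aux3 {M : ℕ} (θ v : Fin M → ℝ) (c : ℝ) :
    (θ - c • v) ⬝ᵥ v = θ ⬝ᵥ v - c * (v ⬝ᵥ v) := by
  simp only [sub_dotProduct, smul_dotProduct, smul_eq_mul]

lemma dot_aux4 {M : ℕ} (a v : Fin M → ℝ) (d : ℝ) :
    a ⬝ᵥ (d • v) = d * (a ⬝ᵥ v) := by
  simp only [dotProduct_smul, smul_eq_mul]

lemma dot_aux5 {M : ℕ} (θ v : Fin M → ℝ) (c : ℝ) :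
    (θ - c • v) ⬝ᵥ (θ - c • v)
      = θ ⬝ᵥ θ - 2 * c * (θ ⬝ᵥ v) + c ^ 2 * (v ⬝ᵥ v) := by
  simp only [sub_dotProduct, dotProduct_sub, smul_dotProduct, dotProduct_smul,
    smul_eq_mul, dotProduct_comm v θ]
  ring

lemma dot_aux6 {M : ℕ} (θ v xv : Fin M → ℝ) (c : ℝ) :
    (θ - c • v) ⬝ᵥ xv = θ ⬝ᵥ xv - c * (v ⬝ᵥ xv) := by
  simp only [sub_dotProduct, smul_dotProduct, smul_eq_mul]

lemma dot_aux7 {M : ℕ} (v xv : Fin M → ℝ) (d : ℝ) :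
    (d • v) ⬝ᵥ xv = d * (v ⬝ᵥ xv) := by
  simp only [smul_dotProduct, smul_eq_mul]

lemma dot_aux8 {M : ℕ} (v : Fin M → ℝ) (d : ℝ) :
    (d • v) ⬝ᵥ (d • v) = d ^ 2 * (v ⬝ᵥ v) := by
  simp only [smul_dotProduct, dotProduct_smul, smul_eq_mul]
  ring

set_option maxHeartbeats 1000000 in
/-- **explicit min-max regret of the LpNML.** For `λ > 0`, `σ > 0` and
`f(y) = N(y; θ̂_yᵀx, σ²)·w(θ̂_y)`, the min-max regret is
`Γ = log ∫f = (1/(2σ²))((λθ̂_λᵀP_λx)²/A_λ − λ‖θ̂_λ‖²) + (1/2)·log(K_λ²/A_λ)`. -/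
theorem lpnml_minmax_regret_formula {N M : ℕ}
    (X : Matrix (Fin N) (Fin M) ℝ) (Y : Fin N → ℝ) (x : Fin M → ℝ)
    (l σ : ℝ) (hl : 0 < l) (hσ : 0 < σ)
    (P : Matrix (Fin M) (Fin M) ℝ) (θridge : Fin M → ℝ) (K A : ℝ)
    (θgenie : ℝ → Fin M → ℝ) (w : (Fin M → ℝ) → ℝ) (f : ℝ → ℝ)
    (hP : P = (Xᵀ * X + l • (1 : Matrix (Fin M) (Fin M) ℝ))⁻¹)
    (hθridge : θridge = P *ᵥ (Xᵀ *ᵥ Y))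
    (hK : K = 1 + x ⬝ᵥ (P *ᵥ x))
    (hA : A = 1 + l * (x ⬝ᵥ ((P * P) *ᵥ x)))
    (hθgenie : ∀ y : ℝ, θgenie y =
      (Xᵀ * X + vecMulVec x x + l • (1 : Matrix (Fin M) (Fin M) ℝ))⁻¹
        *ᵥ (Xᵀ *ᵥ Y + y • x))
    (hw : ∀ θ : Fin M → ℝ, w θ = Real.exp (-(l * (θ ⬝ᵥ θ)) / (2 * σ ^ 2)))
    (hf : ∀ y : ℝ, f y = gaussD y ((θgenie y) ⬝ᵥ x) (σ ^ 2) * w (θgenie y)) :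
    Real.log (∫ y : ℝ, f y)
      = (1 / (2 * σ ^ 2)) *
          ((l * (θridge ⬝ᵥ (P *ᵥ x))) ^ 2 / A - l * (θridge ⬝ᵥ θridge))
        + (1 / 2) * Real.log (K ^ 2 / A) := by
  have hσ2 : (0:ℝ) < σ ^ 2 := by positivity
  set R : Matrix (Fin M) (Fin M) ℝ := Xᵀ * X + l • 1 with hRdef
  set Q : Matrix (Fin M) (Fin M) ℝ :=
    Xᵀ * X + vecMulVec x x + l • (1 : Matrix (Fin M) (Fin M) ℝ) with hQdef
  -- positive definiteness
  have hXX : (Xᵀ * X).PosSemidef := by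
    rw [← Matrix.conjTranspose_eq_transpose_of_trivial]
    exact Matrix.posSemidef_conjTranspose_mul_self X
  have hxx : (vecMulVec x x).PosSemidef := by
    have hcol : vecMulVec x x = Matrix.replicateCol (Fin 1) x * (Matrix.replicateCol (Fin 1) x)ᴴ := by
      rw [Matrix.conjTranspose_eq_transpose_of_trivial, Matrix.transpose_replicateCol,
        Matrix.vecMulVec_eq (Fin 1)]
      rfl
    rw [hcol]
    exact Matrix.posSemidef_self_mul_conjTranspose _
  have hRpos : R.PosDef := by
    have h := (smul_one_posDef (M := M) hl).add_posSemidef hXX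
    have : R = l • 1 + Xᵀ * X := by rw [hRdef, add_comm]
    rwa [this]
  have hQpos : Q.PosDef := by
    have h := (smul_one_posDef (M := M) hl).add_posSemidef (hXX.add hxx)
    have : Q = l • 1 + (Xᵀ * X + vecMulVec x x) := by rw [hQdef, add_comm]
    rwa [this]
  have hRdet : IsUnit R.det := isUnit_iff_ne_zero.mpr hRpos.det_pos.ne'
  have hQdet : IsUnit Q.det := isUnit_iff_ne_zero.mpr hQpos.det_pos.ne'
  have hRP : R * P = 1 := by rw [hP]; exact Matrix.mul_nonsing_inv R hRdet
  have hPsymm : Pᵀ = P := by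
    rw [hP, Matrix.transpose_nonsing_inv]
    congr 1
    rw [hRdef]
    simp [Matrix.transpose_add, Matrix.transpose_mul, Matrix.transpose_smul]
  have hPpos : P.PosDef := by rw [hP]; exact hRpos.inv
  -- scalar quantities
  set s : ℝ := x ⬝ᵥ (P *ᵥ x) with hsdef
  set u : ℝ := (P *ᵥ x) ⬝ᵥ (P *ᵥ x) with hudef
  set t : ℝ := x ⬝ᵥ θridge with htdef
  set r : ℝ := θridge ⬝ᵥ (P *ᵥ x) with hrdef
  set n : ℝ := θridge ⬝ᵥ θridge with hndef
  have hs : 0 ≤ s := by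
    have := hPpos.posSemidef.dotProduct_mulVec_nonneg x
    simpa [hsdef] using this
  have hu : 0 ≤ u := by
    rw [hudef]
    exact Finset.sum_nonneg fun i _ => mul_self_nonneg _
  have hPxP : x ᵥ* P = P *ᵥ x := by
    rw [← hPsymm, Matrix.vecMul_transpose, hPsymm]
  have hAu : A = 1 + l * u := by
    rw [hA, hudef]
    congr 2
    rw [← Matrix.mulVec_mulVec, dotProduct_mulVec, hPxP]
  have hK0 : (0:ℝ) < K := by rw [hK]; linarith
  have hA0 : (0:ℝ) < A := by rw [hAu]; nlinarith
  -- genie decomposition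
  set b : Fin M → ℝ := K⁻¹ • (P *ᵥ x) with hbdef
  set a : Fin M → ℝ := θridge - (t / K) • (P *ᵥ x) with hadef
  have hQsplit : Q = R + vecMulVec x x := by
    rw [hQdef, hRdef]; abel
  have hQv : ∀ v : Fin M → ℝ, Q *ᵥ v = R *ᵥ v + (x ⬝ᵥ v) • x := by
    intro v
    rw [hQsplit, Matrix.add_mulVec, vecMulVec_mulVec']
  have hQPx : Q *ᵥ (P *ᵥ x) = K • x := by
    rw [hQv, Matrix.mulVec_mulVec, hRP, Matrix.one_mulVec, ← hsdef, hK]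
    ext i; simp; ring
  have hRθ : R *ᵥ θridge = Xᵀ *ᵥ Y := by
    rw [hθridge, Matrix.mulVec_mulVec, hRP, Matrix.one_mulVec]
  have hQθ : Q *ᵥ θridge = Xᵀ *ᵥ Y + t • x := by
    rw [hQv, hRθ, ← htdef]
  have hgenie : ∀ y : ℝ, θgenie y = a + y • b := by
    intro y
    rw [hθgenie y]
    have key : Xᵀ *ᵥ Y + y • x = Q *ᵥ (a + y • b) := by
      rw [Matrix.mulVec_add, Matrix.mulVec_smul, hbdef, Matrix.mulVec_smul, hQPx,
        hadef, Matrix.mulVec_sub, Matrix.mulVec_smul, hQPx, hQθ]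
      ext i
      simp only [Pi.add_apply, Pi.sub_apply, Pi.smul_apply, smul_eq_mul]
      field_simp
      ring
    rw [key, Matrix.mulVec_mulVec, Matrix.nonsing_inv_mul Q hQdet, Matrix.one_mulVec]
  -- dot products
  have hθx : θridge ⬝ᵥ x = t := by rw [htdef, dotProduct_comm]
  have hPxx : (P *ᵥ x) ⬝ᵥ x = s := by rw [hsdef, dotProduct_comm]
  have hbx : b ⬝ᵥ x = s / K := by
    rw [hbdef, dot_aux7, hPxx]; ring
  have hbb : b ⬝ᵥ b = u / K ^ 2 := by
    rw [hbdef, dot_aux8, ← hudef]; ring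
  have hax : a ⬝ᵥ x = t - (t / K) * s := by
    rw [hadef, dot_aux6, hθx, hPxx]
  have hab : a ⬝ᵥ b = K⁻¹ * (r - (t / K) * u) := by
    rw [hbdef, dot_aux4, hadef, dot_aux3, ← hrdef, ← hudef]
  have haa : a ⬝ᵥ a = n - 2 * (t / K) * r + (t / K) ^ 2 * u := by
    rw [hadef, dot_aux5, ← hndef, ← hrdef, ← hudef]
  -- scalar coefficients
  set ax : ℝ := t - (t / K) * s with haxdef
  set ab : ℝ := K⁻¹ * (r - (t / K) * u) with habdef
  set aa : ℝ := n - 2 * (t / K) * r + (t / K) ^ 2 * u with haadef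
  set α : ℝ := (1 - s / K) ^ 2 + l * (u / K ^ 2) with hαdef
  set β : ℝ := (1 - s / K) * ax - l * ab with hβdef
  set γ : ℝ := ax ^ 2 + l * aa with hγdef
  have hαA : α = A / K ^ 2 := by
    rw [hαdef, hAu, hK]
    have h1 : (1:ℝ) + s ≠ 0 := by rw [← hK]; exact hK0.ne'
    field_simp
    ring
  have hα0 : (0:ℝ) < α := by rw [hαA]; positivity
  -- pointwise formula for f
  set c : ℝ := (Real.sqrt α)⁻¹ * Real.exp ((β ^ 2 / α - γ) / (2 * σ ^ 2)) with hcdef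
  have hfy : ∀ y : ℝ, f y =
      c * ((Real.sqrt (2 * Real.pi * (σ ^ 2 / α)))⁻¹ *
        Real.exp (-(y - β / α) ^ 2 / (2 * (σ ^ 2 / α)))) := by
    intro y
    rw [hf y, hw, hgenie y, dot_aux1, dot_aux2, hax, hbx, hab, haa, hbb]
    unfold gaussD
    rw [hcdef]
    have hsqrt : (Real.sqrt α)⁻¹ * (Real.sqrt (2 * Real.pi * (σ ^ 2 / α)))⁻¹
        = (Real.sqrt (2 * Real.pi * σ ^ 2))⁻¹ := by
      rw [← mul_inv]
      congr 1
      rw [← Real.sqrt_mul hα0.le]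
      congr 1
      field_simp
    rw [mul_assoc, ← Real.exp_add]
    have hre : ((Real.sqrt α)⁻¹ * Real.exp ((β ^ 2 / α - γ) / (2 * σ ^ 2))) *
        ((Real.sqrt (2 * Real.pi * (σ ^ 2 / α)))⁻¹ *
          Real.exp (-(y - β / α) ^ 2 / (2 * (σ ^ 2 / α))))
        = (Real.sqrt (2 * Real.pi * σ ^ 2))⁻¹ *
          Real.exp ((β ^ 2 / α - γ) / (2 * σ ^ 2) + -(y - β / α) ^ 2 / (2 * (σ ^ 2 / α))) := by
      rw [Real.exp_add, ← hsqrt]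
      ring
    rw [hre]
    congr 1
    have hαne : ((1:ℝ) - s / K) ^ 2 + l * (u / K ^ 2) ≠ 0 := by
      rw [← hαdef]; exact hα0.ne'
    rw [hβdef, hγdef, hαdef]
    revert hαne
    generalize s / K = p
    generalize u / K ^ 2 = q
    intro hαne
    have hσne : σ ≠ 0 := hσ.ne'
    rw [Real.exp_eq_exp]
    field_simp
    ring
  -- the integral
  have hv0 : (0:ℝ) < σ ^ 2 / α := by positivity
  have hint1 : ∫ y : ℝ, ((Real.sqrt (2 * Real.pi * (σ ^ 2 / α)))⁻¹ *
      Real.exp (-(y - β / α) ^ 2 / (2 * (σ ^ 2 / α)))) = 1 := by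
    have hne : (σ ^ 2 / α).toNNReal ≠ 0 := by
      simp [Real.toNNReal_eq_zero, not_le, hv0]
    have h := ProbabilityTheory.integral_gaussianPDFReal_eq_one (β / α) hne
    simpa [ProbabilityTheory.gaussianPDFReal, Real.coe_toNNReal _ hv0.le] using h
  have hint : ∫ y : ℝ, f y = c := by
    simp_rw [hfy]
    rw [MeasureTheory.integral_const_mul, hint1, mul_one]
  -- conclude
  rw [hint, hcdef, Real.log_mul (by positivity) (Real.exp_pos _).ne',
    Real.log_exp, Real.log_inv, Real.log_sqrt hα0.le]
  have hkey : (β ^ 2 / α - γ) / (2 * σ ^ 2)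
      = 1 / (2 * σ ^ 2) * ((l * r) ^ 2 / A - l * n) := by
    have hid : β ^ 2 / α - γ = (l * r) ^ 2 / A - l * n := by
      have h1 : (1:ℝ) + s ≠ 0 := by rw [← hK]; exact hK0.ne'
      have h2 : (1:ℝ) + l * u ≠ 0 := by rw [← hAu]; exact hA0.ne'
      have h3 : ((1:ℝ) - s / (1 + s)) ^ 2 + l * (u / (1 + s) ^ 2) ≠ 0 := by
        rw [← hK, ← hαdef]; exact hα0.ne'
      have h4 : ((1:ℝ) + s - s) ^ 2 + l * u ≠ 0 := by ring_nf; exact h2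
      rw [hβdef, hγdef, hαdef, haxdef, habdef, haadef, hK, hAu]
      field_simp
      ring
    rw [hid]
    ring
  have hlog : -(Real.log α / 2) = 1 / 2 * Real.log (K ^ 2 / A) := by
    rw [hαA, Real.log_div hA0.ne' (by positivity), Real.log_div (by positivity) hA0.ne']
    ring
  rw [hkey, hlog]
  ring
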